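/- arXiv:math/0511512 — 2 statements merged into one kernel-verified Lean document; each statement's English description precedes it below -/
import Mathlib

section
/- For all a, b ∈ U₁ and every t ≥ 0, the covariance of W_c(t) is given by E[⟨a, W_c(t)⟩_{U₁} · ⟨b, W_c(t)⟩_{U₁}] = t · ∑_{j=1}^{∞} ⟨a, J g_j⟩_{U₁} ⟨b, J g_j⟩_{U₁} = t · ⟨(J ∘ J*) a, b⟩_{U₁}, where J* : U₁ → U₀ is the Hilbert-space adjoint of J; in particular the covariance operator of W_c(1) is Q₁ = J ∘ J*. -/
/-!
The partial sums `S m = ∑_{j<m} β j t • J (g j)` have covariance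
`E[⟪a, S m⟫ ⟪b, S m⟫] = t ∑_{j<m} ⟪a, J gⱼ⟫ ⟪b, J gⱼ⟫`, since `E[β j t * β k t] = t δⱼₖ` by
independence and the `N(0, t)` law. The functional `f ↦ E[⟪a, f⟫ ⟪b, f⟫]` is continuous on
`L²(Ω; U₁)` (it is an inner product of two continuous linear images of `f`), so it passes to the
`L²`-limit `W t`. Finally `⟪a, J gⱼ⟫ = ⟪J* a, gⱼ⟫`, and Parseval's identity in the basis `g` sums
the series to `⟪J* a, J* b⟫ = ⟪J J* a, b⟫`.
-/

open MeasureTheory ProbabilityTheory Filter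
open scoped RealInnerProductSpace NNReal Topology

/-- An independent family of standard real-valued Brownian motions started at `0`:
each `β j` is a measurable process starting at `0`, with Gaussian increments
`β j t - β j s ~ N(0, t - s)`, independent increments, continuous paths, and the
processes `β j`, `j ∈ ℕ`, are mutually independent. -/
structure IsBMFamily {Ω : Type*} [MeasurableSpace Ω] (P : Measure Ω)
    (β : ℕ → ℝ → Ω → ℝ) : Prop where
  meas : ∀ j t, Measurable (β j t)
  start : ∀ j ω, β j 0 ω = 0
  incr_law : ∀ j s t, 0 ≤ s → s ≤ t →
    P.map (fun ω => β j t ω - β j s ω) = gaussianReal 0 (t - s).toNNReal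
  indep_incr : ∀ j (n : ℕ) (t : Fin (n + 1) → ℝ), Monotone t →
    iIndepFun
      (fun i : Fin n => fun ω => β j (t i.succ) ω - β j (t i.castSucc) ω) P
  cont : ∀ j ω, Continuous fun t => β j t ω
  indep : iIndepFun (fun j => fun ω => fun t => β j t ω) P

section L2

variable {α E : Type*} [MeasurableSpace α] {μ : Measure α}
  [NormedAddCommGroup E] [InnerProductSpace ℝ E]

theorem MeasureTheory.MemLp.norm_toLp_sq {f : α → E} (hf : MemLp f 2 μ) :
    ‖hf.toLp f‖ ^ 2 = ∫ x, ‖f x‖ ^ 2 ∂μ := by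
  rw [← real_inner_self_eq_norm_sq, L2.inner_def]
  refine integral_congr_ae (hf.coeFn_toLp.mono fun x hx => ?_)
  simp only [hx, real_inner_self_eq_norm_sq]

theorem tendsto_toLp_of_tendsto_integral_norm_sub_sq {ι : Type*} {l : Filter ι}
    {f : ι → α → E} {f₀ : α → E} (hf : ∀ i, MemLp (f i) 2 μ) (hf₀ : MemLp f₀ 2 μ)
    (h : Tendsto (fun i => ∫ x, ‖f i x - f₀ x‖ ^ 2 ∂μ) l (𝓝 0)) :
    Tendsto (fun i => (hf i).toLp (f i)) l (𝓝 (hf₀.toLp f₀)) := by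
  rw [tendsto_iff_norm_sub_tendsto_zero]
  have hnorm : ∀ i, ‖(hf i).toLp (f i) - hf₀.toLp f₀‖
      = Real.sqrt (∫ x, ‖f i x - f₀ x‖ ^ 2 ∂μ) := fun i => by
    rw [← MemLp.toLp_sub, ← Real.sqrt_sq (norm_nonneg _), ((hf i).sub hf₀).norm_toLp_sq]
    rfl
  simpa only [hnorm, Real.sqrt_zero] using h.sqrt

theorem integral_inner_mul_inner_eq_inner_compLp {f : α → E} (hf : MemLp f 2 μ) (a b : E) :
    ∫ x, ⟪a, f x⟫ * ⟪b, f x⟫ ∂μ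
      = ⟪(innerSL ℝ a).compLp (hf.toLp f), (innerSL ℝ b).compLp (hf.toLp f)⟫ := by
  rw [L2.inner_def]
  refine integral_congr_ae ?_
  filter_upwards [hf.coeFn_toLp, (innerSL ℝ a).coeFn_compLp (hf.toLp f),
    (innerSL ℝ b).coeFn_compLp (hf.toLp f)] with x hx ha hb
  rw [ha, hb, hx, innerSL_apply_apply, innerSL_apply_apply, RCLike.inner_apply, conj_trivial,
    mul_comm]

theorem tendsto_integral_inner_mul_inner {ι : Type*} {l : Filter ι}
    {f : ι → α → E} {f₀ : α → E} (hf : ∀ i, MemLp (f i) 2 μ) (hf₀ : MemLp f₀ 2 μ)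
    (h : Tendsto (fun i => ∫ x, ‖f i x - f₀ x‖ ^ 2 ∂μ) l (𝓝 0)) (a b : E) :
    Tendsto (fun i => ∫ x, ⟪a, f i x⟫ * ⟪b, f i x⟫ ∂μ) l
      (𝓝 (∫ x, ⟪a, f₀ x⟫ * ⟪b, f₀ x⟫ ∂μ)) := by
  simp only [integral_inner_mul_inner_eq_inner_compLp (hf _),
    integral_inner_mul_inner_eq_inner_compLp hf₀]
  have hcont : Continuous fun F : Lp E 2 μ => ⟪(innerSL ℝ a).compLp F, (innerSL ℝ b).compLp F⟫ :=
    ((innerSL ℝ a).compLpL 2 μ).continuous.inner ((innerSL ℝ b).compLpL 2 μ).continuous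
  exact (hcont.tendsto _).comp (tendsto_toLp_of_tendsto_integral_norm_sub_sq hf hf₀ h)

end L2

theorem integral_inner_sum_smul_mul_inner_sum_smul {Ω ι E : Type*} [MeasurableSpace Ω]
    {P : Measure Ω} [NormedAddCommGroup E] [InnerProductSpace ℝ E] [DecidableEq ι]
    {X : ι → Ω → ℝ} (hX : ∀ i, MemLp (X i) 2 P) {c : ℝ}
    (hcov : ∀ i j, ∫ ω, X i ω * X j ω ∂P = if i = j then c else 0)
    (v : ι → E) (s : Finset ι) (a b : E) :
    ∫ ω, ⟪a, ∑ i ∈ s, X i ω • v i⟫ * ⟪b, ∑ i ∈ s, X i ω • v i⟫ ∂P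
      = c * ∑ i ∈ s, ⟪a, v i⟫ * ⟪b, v i⟫ := by
  have hint : ∀ i j, Integrable (fun ω => ⟪a, v i⟫ * ⟪b, v j⟫ * (X i ω * X j ω)) P :=
    fun i j => ((hX i).integrable_mul (hX j)).const_mul _
  have hexpand : ∀ ω, ⟪a, ∑ i ∈ s, X i ω • v i⟫ * ⟪b, ∑ i ∈ s, X i ω • v i⟫
      = ∑ i ∈ s, ∑ j ∈ s, ⟪a, v i⟫ * ⟪b, v j⟫ * (X i ω * X j ω) := fun ω => by
    simp only [inner_sum, real_inner_smul_right, Finset.sum_mul_sum]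
    exact Finset.sum_congr rfl fun i _ => Finset.sum_congr rfl fun j _ => by ring
  simp only [hexpand]
  rw [integral_finsetSum _ fun i _ => integrable_finsetSum _ fun j _ => hint i j,
    Finset.mul_sum]
  refine Finset.sum_congr rfl fun i hi => ?_
  simp only [integral_finsetSum _ fun j _ => hint i j, integral_const_mul, hcov, mul_ite,
    mul_zero, Finset.sum_ite_eq, if_pos hi]
  ring

namespace IsBMFamily

variable {Ω : Type*} [MeasurableSpace Ω] {P : Measure Ω} {β : ℕ → ℝ → Ω → ℝ}

theorem map_eq_gaussianReal (hβ : IsBMFamily P β) (j : ℕ) {t : ℝ} (ht : 0 ≤ t) :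
    P.map (β j t) = gaussianReal 0 t.toNNReal := by
  simpa only [hβ.start, sub_zero] using hβ.incr_law j 0 t le_rfl ht

theorem memLp_two (hβ : IsBMFamily P β) (j : ℕ) {t : ℝ} (ht : 0 ≤ t) : MemLp (β j t) 2 P := by
  have h := memLp_id_gaussianReal (μ := 0) (v := t.toNNReal) 2
  rw [← hβ.map_eq_gaussianReal j ht] at h
  exact (memLp_map_measure_iff aestronglyMeasurable_id (hβ.meas j t).aemeasurable).mp h

theorem integral_eq_zero (hβ : IsBMFamily P β) (j : ℕ) {t : ℝ} (ht : 0 ≤ t) :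
    ∫ ω, β j t ω ∂P = 0 := by
  have h := integral_id_gaussianReal (μ := 0) (v := t.toNNReal)
  rwa [← hβ.map_eq_gaussianReal j ht,
    integral_map (f := fun x => x) (hβ.meas j t).aemeasurable aestronglyMeasurable_id] at h

theorem integral_sq (hβ : IsBMFamily P β) (j : ℕ) {t : ℝ} (ht : 0 ≤ t) :
    ∫ ω, β j t ω ^ 2 ∂P = t := by
  have hvar : ∫ x, x ^ 2 ∂gaussianReal 0 t.toNNReal = t := by
    rw [← variance_of_integral_eq_zero aemeasurable_id' integral_id_gaussianReal,
      variance_fun_id_gaussianReal, Real.coe_toNNReal _ ht]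
  rwa [← hβ.map_eq_gaussianReal j ht, integral_map (f := fun x => x ^ 2)
    (hβ.meas j t).aemeasurable (measurable_id.pow_const 2).aestronglyMeasurable] at hvar

theorem integral_mul (hβ : IsBMFamily P β) (j k : ℕ) {t : ℝ} (ht : 0 ≤ t) :
    ∫ ω, β j t ω * β k t ω ∂P = if j = k then t else 0 := by
  split_ifs with hjk
  · subst hjk
    simpa only [sq] using hβ.integral_sq j ht
  · have hind : IndepFun (β j t) (β k t) P :=
      (hβ.indep.indepFun hjk).comp (measurable_pi_apply t) (measurable_pi_apply t)
    rw [hind.integral_fun_mul_eq_mul_integral (hβ.meas j t).aestronglyMeasurable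
      (hβ.meas k t).aestronglyMeasurable, hβ.integral_eq_zero j ht, zero_mul]

end IsBMFamily

theorem HilbertBasis.hasSum_inner_apply_mul_inner_apply {ι U₀ U₁ : Type*}
    [NormedAddCommGroup U₀] [InnerProductSpace ℝ U₀] [CompleteSpace U₀]
    [NormedAddCommGroup U₁] [InnerProductSpace ℝ U₁] [CompleteSpace U₁]
    (g : HilbertBasis ι ℝ U₀) (J : U₀ →L[ℝ] U₁) (a b : U₁) :
    HasSum (fun j => ⟪a, J (g j)⟫ * ⟪b, J (g j)⟫)
      ⟪(J.comp (ContinuousLinearMap.adjoint J)) a, b⟫ := by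
  have hterm : (fun j => ⟪a, J (g j)⟫ * ⟪b, J (g j)⟫) = fun j =>
      ⟪ContinuousLinearMap.adjoint J a, g j⟫ * ⟪g j, ContinuousLinearMap.adjoint J b⟫ := by
    funext j
    rw [ContinuousLinearMap.adjoint_inner_left, ContinuousLinearMap.adjoint_inner_right,
      real_inner_comm b]
  rw [hterm, ContinuousLinearMap.comp_apply, ← ContinuousLinearMap.adjoint_inner_right]
  exact g.hasSum_inner_mul_inner _ _

theorem stmt4_general
    {Ω : Type*} [MeasurableSpace Ω] (P : Measure Ω)
    {U₀ U₁ : Type*}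
    [NormedAddCommGroup U₀] [InnerProductSpace ℝ U₀] [CompleteSpace U₀]
    [NormedAddCommGroup U₁] [InnerProductSpace ℝ U₁] [CompleteSpace U₁]
    (g : HilbertBasis ℕ ℝ U₀) (J : U₀ →L[ℝ] U₁)
    (β : ℕ → ℝ → Ω → ℝ) (hβ : IsBMFamily P β)
    (W : ℝ → Ω → U₁)
    (hW : ∀ t, 0 ≤ t → MemLp (W t) 2 P ∧
      Tendsto (fun m => ∫ ω, ‖(∑ j ∈ Finset.range m, β j t ω • J (g j)) - W t ω‖ ^ 2 ∂P)
        atTop (𝓝 0))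
    (t : ℝ) (ht : 0 ≤ t) (a b : U₁) :
    ∫ ω, ⟪a, W t ω⟫ * ⟪b, W t ω⟫ ∂P
        = t * ∑' j, ⟪a, J (g j)⟫ * ⟪b, J (g j)⟫ ∧
    ∫ ω, ⟪a, W t ω⟫ * ⟪b, W t ω⟫ ∂P
        = t * ⟪(J.comp (ContinuousLinearMap.adjoint J)) a, b⟫ := by
  obtain ⟨hWmem, hWconv⟩ := hW t ht
  have hβmem : ∀ j, MemLp (β j t) 2 P := fun j => hβ.memLp_two j ht
  have hSmem : ∀ m, MemLp (fun ω => ∑ j ∈ Finset.range m, β j t ω • J (g j)) 2 P :=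
    fun m => memLp_finsetSum _ fun j _ => (memLp_top_const (J (g j))).smul (hβmem j)
  have hsum := g.hasSum_inner_apply_mul_inner_apply J a b
  have hpartial : Tendsto (fun m => ∫ ω, ⟪a, ∑ j ∈ Finset.range m, β j t ω • J (g j)⟫ *
      ⟪b, ∑ j ∈ Finset.range m, β j t ω • J (g j)⟫ ∂P) atTop
      (𝓝 (t * ⟪(J.comp (ContinuousLinearMap.adjoint J)) a, b⟫)) := by
    simpa only [integral_inner_sum_smul_mul_inner_sum_smul hβmem
      (fun j k => hβ.integral_mul j k ht)] using hsum.tendsto_sum_nat.const_mul t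
  have hcov := tendsto_nhds_unique (tendsto_integral_inner_mul_inner hSmem hWmem hWconv a b)
    hpartial
  exact ⟨hcov.trans (by rw [hsum.tsum_eq]), hcov⟩

/-- Covariance of `W_c(t)`:
`E[⟪a, W_c(t)⟫ ⟪b, W_c(t)⟫] = t * ∑' j, ⟪a, J gⱼ⟫ ⟪b, J gⱼ⟫ = t * ⟪(J ∘ J*) a, b⟫`;
in particular the covariance operator of `W_c(1)` is `Q₁ = J ∘ J*`. -/
theorem stmt4
    {Ω : Type*} [MeasurableSpace Ω] (P : Measure Ω) [IsProbabilityMeasure P]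
    {U₀ U₁ : Type*}
    [NormedAddCommGroup U₀] [InnerProductSpace ℝ U₀] [CompleteSpace U₀]
    [SecondCountableTopology U₀]
    [NormedAddCommGroup U₁] [InnerProductSpace ℝ U₁] [CompleteSpace U₁]
    [SecondCountableTopology U₁]
    (g : HilbertBasis ℕ ℝ U₀) (J : U₀ →L[ℝ] U₁) (hJinj : Function.Injective J)
    (hJHS : Summable fun j => ‖J (g j)‖ ^ 2)
    (β : ℕ → ℝ → Ω → ℝ) (hβ : IsBMFamily P β)
    (W : ℝ → Ω → U₁)
    (hW : ∀ t, 0 ≤ t → MemLp (W t) 2 P ∧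
      Tendsto (fun m => ∫ ω, ‖(∑ j ∈ Finset.range m, β j t ω • J (g j)) - W t ω‖ ^ 2 ∂P)
        atTop (𝓝 0))
    (t : ℝ) (ht : 0 ≤ t) (a b : U₁) :
    ∫ ω, ⟪a, W t ω⟫ * ⟪b, W t ω⟫ ∂P
        = t * ∑' j, ⟪a, J (g j)⟫ * ⟪b, J (g j)⟫ ∧
    ∫ ω, ⟪a, W t ω⟫ * ⟪b, W t ω⟫ ∂P
        = t * ⟪(J.comp (ContinuousLinearMap.adjoint J)) a, b⟫ :=
  stmt4_general P g J β hβ W hW t ht a b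
end

section
/- Let J : U₀ → U₁ be an injective bounded linear operator between real Hilbert spaces and let Q₁ = J ∘ J*. Then there exists a linear isometry G : U₀ → U₁ such that Q₁^{1/2} ∘ G = J; consequently, for every u in U₀ (identified with its image J u in Im(Q₁^{1/2})), the norm ‖u‖_{U₀} equals ‖Q₁^{-1/2}(J u)‖_{U₁}, where Q₁^{-1/2}(J u) denotes the unique preimage of J u under Q₁^{1/2} lying in the orthogonal complement of the kernel of Q₁^{1/2}. -/
open scoped RealInnerProductSpace

/-!
Since `R` is self-adjoint with `R² = J J*`, we get `‖R x‖ = ‖J* x‖` for all `x`, so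
`J* x ↦ R x` is a well-defined isometry on `range J*`. That range is dense because `J` is
injective, and the continuous extension `G` of this isometry satisfies `R G = J`. Moreover `G`
takes values in the closure of `range R`, which is `(ker R)ᗮ`; as `R` is injective on `(ker R)ᗮ`,
any preimage `v ∈ (ker R)ᗮ` of `J u` equals `G u`, whence `‖v‖ = ‖G u‖ = ‖u‖`.
-/

namespace LinearMap

variable {𝕜 E Eₗ F : Type*} [NontriviallyNormedField 𝕜] [AddCommGroup E] [Module 𝕜 E]
  [NormedAddCommGroup Eₗ] [NormedSpace 𝕜 Eₗ] [NormedAddCommGroup F] [NormedSpace 𝕜 F]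
  [CompleteSpace F]

theorem exists_linearIsometry_comp_eq_of_norm_eq {f : E →ₗ[𝕜] F} {e : E →ₗ[𝕜] Eₗ}
    (h_dense : DenseRange e) (h_norm : ∀ x, ‖f x‖ = ‖e x‖) :
    ∃ G : Eₗ →ₗᵢ[𝕜] F, ∀ x, G (e x) = f x := by
  have h_bound : ∃ C, ∀ x, ‖f x‖ ≤ C * ‖e x‖ := ⟨1, fun x ↦ by rw [one_mul, h_norm]⟩
  refine ⟨⟨(f.extendOfNorm e).toLinearMap, fun y ↦ ?_⟩, extendOfNorm_eq h_dense h_bound⟩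
  refine h_dense.induction_on y (isClosed_eq (by fun_prop) continuous_norm) fun x ↦ ?_
  simp [extendOfNorm_eq h_dense h_bound, h_norm]

end LinearMap

namespace ContinuousLinearMap

variable {𝕜 E F G : Type*} [RCLike 𝕜]
  [NormedAddCommGroup E] [InnerProductSpace 𝕜 E] [CompleteSpace E]
  [NormedAddCommGroup F] [InnerProductSpace 𝕜 F] [CompleteSpace F]
  [NormedAddCommGroup G] [InnerProductSpace 𝕜 G] [CompleteSpace G]

theorem norm_apply_eq_of_adjoint_comp_self_eq {A : E →L[𝕜] F} {B : E →L[𝕜] G}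
    (h : adjoint A ∘L A = adjoint B ∘L B) (x : E) : ‖A x‖ = ‖B x‖ := by
  have h_sq := apply_norm_sq_eq_inner_adjoint_left A x
  rw [h, ← apply_norm_sq_eq_inner_adjoint_left] at h_sq
  exact (pow_left_inj₀ (norm_nonneg _) (norm_nonneg _) two_ne_zero).mp h_sq

theorem denseRange_adjoint_of_injective {T : E →L[𝕜] F} (hT : Function.Injective T) :
    DenseRange (adjoint T) := by
  have h_closure := T.orthogonal_ker
  rw [LinearMap.ker_eq_bot.mpr hT, Submodule.bot_orthogonal_eq_top, eq_comm] at h_closure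
  exact Submodule.dense_iff_topologicalClosure_eq_top.mpr h_closure

theorem range_le_orthogonal_ker_of_isSelfAdjoint {T : E →L[𝕜] E} (hT : IsSelfAdjoint T) :
    (T : E →ₗ[𝕜] E).range ≤ (T : E →ₗ[𝕜] E).kerᗮ := by
  rw [T.orthogonal_ker, hT.adjoint_eq]
  exact Submodule.le_topologicalClosure _

end ContinuousLinearMap

theorem LinearMap.injOn_orthogonal_ker {𝕜 E F : Type*} [RCLike 𝕜]
    [NormedAddCommGroup E] [InnerProductSpace 𝕜 E] [AddCommGroup F] [Module 𝕜 F]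
    (T : E →ₗ[𝕜] F) : Set.InjOn T T.kerᗮ := by
  intro x hx y hy hxy
  have h_ker : x - y ∈ T.ker := by simp [hxy]
  exact sub_eq_zero.mp <|
    Submodule.disjoint_def.mp T.ker.orthogonal_disjoint _ h_ker (sub_mem hx hy)

theorem stmt11_general
    {U₀ U₁ : Type*}
    [NormedAddCommGroup U₀] [InnerProductSpace ℝ U₀] [CompleteSpace U₀]
    [NormedAddCommGroup U₁] [InnerProductSpace ℝ U₁] [CompleteSpace U₁]
    (J : U₀ →L[ℝ] U₁) (hJinj : Function.Injective J)
    (R : U₁ →L[ℝ] U₁) (hRsa : IsSelfAdjoint R)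
    (hRsq : R.comp R = J.comp (ContinuousLinearMap.adjoint J)) :
    (∃ G : U₀ →ₗᵢ[ℝ] U₁, ∀ u : U₀, R (G u) = J u) ∧
    ∀ (u : U₀) (v : U₁), R v = J u → v ∈ (LinearMap.ker (R : U₁ →ₗ[ℝ] U₁))ᗮ → ‖u‖ = ‖v‖ := by
  open ContinuousLinearMap in
  have h_dense : DenseRange (adjoint J) := denseRange_adjoint_of_injective hJinj
  have h_norm : ∀ x, ‖R x‖ = ‖adjoint J x‖ := norm_apply_eq_of_adjoint_comp_self_eq
    (by rw [hRsa.adjoint_eq, hRsq, adjoint_adjoint])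
  obtain ⟨G, hG⟩ : ∃ G : U₀ →ₗᵢ[ℝ] U₁, ∀ x, G (adjoint J x) = R x :=
    LinearMap.exists_linearIsometry_comp_eq_of_norm_eq
      (f := (R : U₁ →ₗ[ℝ] U₁)) (e := (adjoint J : U₁ →ₗ[ℝ] U₀)) h_dense h_norm
  have hRG : ∀ u, R (G u) = J u := congrFun <| h_dense.equalizer (by fun_prop) J.continuous <|
    funext fun x ↦ by simp [hG, ← comp_apply, hRsq]
  have hG_mem : ∀ u, G u ∈ (R : U₁ →ₗ[ℝ] U₁).kerᗮ := fun u ↦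
    h_dense.induction_on u ((Submodule.isClosed_orthogonal _).preimage G.continuous) fun x ↦
      hG x ▸ range_le_orthogonal_ker_of_isSelfAdjoint hRsa ⟨x, rfl⟩
  refine ⟨⟨G, hRG⟩, fun u v hv hv_mem ↦ ?_⟩
  rw [← G.norm_map u, LinearMap.injOn_orthogonal_ker _ hv_mem (hG_mem u) (hv.trans (hRG u).symm)]

/-- For an injective bounded operator `J : U₀ → U₁` between real Hilbert spaces,
with `Q₁ = J ∘ J*` and `R = Q₁^{1/2}` its non-negative self-adjoint square root,
there exists a linear isometry `G : U₀ → U₁` with `Q₁^{1/2} ∘ G = J`; consequently,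
for every `u ∈ U₀`, `‖u‖_{U₀} = ‖Q₁^{-1/2}(J u)‖_{U₁}`, where `Q₁^{-1/2}(J u)` is
the unique preimage of `J u` under `Q₁^{1/2}` lying in `(ker Q₁^{1/2})ᗮ`. -/
theorem stmt11
    {U₀ U₁ : Type*}
    [NormedAddCommGroup U₀] [InnerProductSpace ℝ U₀] [CompleteSpace U₀]
    [NormedAddCommGroup U₁] [InnerProductSpace ℝ U₁] [CompleteSpace U₁]
    (J : U₀ →L[ℝ] U₁) (hJinj : Function.Injective J)
    (R : U₁ →L[ℝ] U₁) (hRsa : IsSelfAdjoint R) (hRnn : ∀ x : U₁, 0 ≤ ⟪R x, x⟫)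
    (hRsq : R.comp R = J.comp (ContinuousLinearMap.adjoint J)) :
    (∃ G : U₀ →ₗᵢ[ℝ] U₁, ∀ u : U₀, R (G u) = J u) ∧
    ∀ (u : U₀) (v : U₁), R v = J u → v ∈ (LinearMap.ker (R : U₁ →ₗ[ℝ] U₁))ᗮ → ‖u‖ = ‖v‖ :=
  stmt11_general J hJinj R hRsa hRsq
end
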